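/- For the three patterns A_1 = THH, A_2 = HTH, A_3 = HHT in the three-player game with heads probability p and tails probability q = 1 − p (0 < p < 1), the winning probabilities are p_{A_1} = q(1 + pq)/(1 + q), p_{A_2} = q/(1 + q), and p_{A_3} = p(1 − q^2)/(1 + q). In particular, for the fair coin p = 1/2 one gets p_{A_1} = 5/12, p_{A_2} = 1/3 and p_{A_3} = 1/4. -/

import Mathlib

open MeasureTheory ENNReal

noncomputable section

/-- Probability of a single toss outcome: `true` (heads) has probability `p`,
`false` (tails) has probability `1 - p`. -/
def letterP (p : ℝ) (b : Bool) : ℝ := if b then p else 1 - p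

/-- Probability of a finite string of tosses (`1` for the empty string). -/
def strP (p : ℝ) (A : List Bool) : ℝ := (A.map (letterP p)).prod

/-- `μ` is the product measure on `{H,T}^ℕ` of i.i.d. coin tosses with heads
probability `p`: every cylinder set has the product probability. -/
def IsCoinMeasure (p : ℝ) (μ : Measure (ℕ → Bool)) : Prop :=
  ∀ (n : ℕ) (a : Fin n → Bool),
    μ {ξ | ∀ i : Fin n, ξ i = a i} = ENNReal.ofReal (∏ i, letterP p (a i))

/-- The pattern `A` (of length `l`) occurs ending exactly at toss `n`
(toss number `k ≥ 1` of `ξ` is `ξ (k - 1)`): `n ≥ l` and tosses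
`n - l + 1, …, n` spell `A`. -/
def occursAt (A : List Bool) (ξ : ℕ → Bool) (n : ℕ) : Prop :=
  A.length ≤ n ∧ (List.ofFn fun k : Fin A.length => ξ (n - A.length + k)) = A

/-- The first toss at which the pattern `A` has occurred (`⊤` if it never occurs). -/
def hitTime (A : List Bool) (ξ : ℕ → Bool) : ℕ∞ :=
  ⨅ (n : ℕ) (_ : occursAt A ξ n), (n : ℕ∞)

/-- The number of tosses until the `m`-player game ends: the minimum of the
hitting times of the patterns `A i`. -/
def gameTime {m : ℕ} (A : Fin m → List Bool) (ξ : ℕ → Bool) : ℕ∞ :=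
  ⨅ i, hitTime (A i) ξ

/-- The three patterns of the example: `A₁ = THH`, `A₂ = HTH`, `A₃ = HHT`
(heads `H = true`, tails `T = false`). -/
def exPatterns : Fin 3 → List Bool :=
  ![[false, true, true], [true, false, true], [true, true, false]]

/-!
Call a word a first win for player `i` if it ends with `Aᵢ` and no pattern occurs in it
earlier. Cylinders of distinct first-win words are disjoint, and the cylinder of a first win
for `i` lies in the event that `i` wins. So it suffices to exhibit enough first wins: with the
reset words `T^a (H T^(d+2))*`, the words `(reset word) HH` (nonempty reset word),
`(reset word) HTH` and `H^(k+2) T` are first wins for `THH`, `HTH`, `HHT`. Their cylinder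
probabilities are geometric series over `a`, `k` and over lists of block lengths; they sum to
the three claimed values, which add up to `1`. Hence each winning event has exactly that
probability, without having to show that these are all the first wins.
-/

def tosses (ξ : ℕ → Bool) (n : ℕ) : List Bool := List.ofFn fun k : Fin n => ξ k

@[simp] theorem length_tosses (ξ : ℕ → Bool) (n : ℕ) : (tosses ξ n).length = n := by
  simp [tosses]

section HittingTimes

variable {A : List Bool} {ξ : ℕ → Bool} {n : ℕ}

theorem occursAt_iff_isSuffix : occursAt A ξ n ↔ A <:+ tosses ξ n := by
  have hdrop : A.length ≤ n → (tosses ξ n).drop (n - A.length) =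
      List.ofFn fun k : Fin A.length => ξ (n - A.length + k) := fun h => by
    apply List.ext_getElem <;> simp [tosses]
    omega
  rw [List.suffix_iff_eq_drop, length_tosses]
  constructor
  · rintro ⟨h, hA⟩
    rw [hdrop h, hA]
  · intro hA
    have h : A.length ≤ n := by
      rw [hA, List.length_drop, length_tosses]
      omega
    exact ⟨h, by rw [← hdrop h, ← hA]⟩

theorem hitTime_le_of_occursAt (h : occursAt A ξ n) : hitTime A ξ ≤ n :=
  iInf₂_le n h

theorem le_hitTime_of_forall_lt (h : ∀ m < n, ¬ occursAt A ξ m) :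
    (n : ℕ∞) ≤ hitTime A ξ :=
  le_iInf₂ fun m hm => Nat.cast_le.2 (not_lt.1 fun hlt => h m hlt hm)

theorem occursAt_of_hitTime_eq (h : hitTime A ξ = n) : occursAt A ξ n := by
  rw [hitTime, iInf_subtype', ENat.iInf_eq_natCast_iff] at h
  obtain ⟨⟨m, hm⟩, hmn⟩ := h.1
  rwa [← Nat.cast_inj.1 hmn]

end HittingTimes

def wordCylinder (w : List Bool) : Set (ℕ → Bool) := {ξ | ∀ i : Fin w.length, ξ i = w[i]}

section Cylinders

variable {w w' : List Bool} {ξ : ℕ → Bool}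

theorem measurableSet_wordCylinder (w : List Bool) : MeasurableSet (wordCylinder w) := by
  simp only [wordCylinder, Set.ofPred_forall]
  exact .iInter fun i => measurableSet_eq_fun (measurable_pi_apply _) measurable_const

theorem IsCoinMeasure.measure_wordCylinder {p : ℝ} {μ : Measure (ℕ → Bool)}
    (hμ : IsCoinMeasure p μ) (w : List Bool) :
    μ (wordCylinder w) = ENNReal.ofReal (strP p w) := by
  rw [wordCylinder, hμ, strP, ← List.prod_ofFn]
  exact congrArg (ENNReal.ofReal ∘ List.prod) (List.ofFn_getElem_eq_map w _)

theorem tosses_eq_take_of_mem_wordCylinder (hξ : ξ ∈ wordCylinder w) {m : ℕ}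
    (hm : m ≤ w.length) : tosses ξ m = w.take m := by
  apply List.ext_getElem (by simp [hm])
  intro k hk _
  simp [tosses, hξ ⟨k, by simp at hk; omega⟩]

theorem eq_of_mem_wordCylinder (hξ : ξ ∈ wordCylinder w) (hξ' : ξ ∈ wordCylinder w')
    (hlen : w.length = w'.length) : w = w' := by
  rw [← List.take_length (l := w), ← List.take_length (l := w'),
    ← tosses_eq_take_of_mem_wordCylinder hξ le_rfl,
    ← tosses_eq_take_of_mem_wordCylinder hξ' le_rfl, hlen]

end Cylinders

def winEvent {m : ℕ} (A : Fin m → List Bool) (i : Fin m) : Set (ℕ → Bool) :=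
  {ξ | gameTime A ξ = hitTime (A i) ξ ∧ gameTime A ξ ≠ ⊤}

theorem pairwise_disjoint_winEvent {m : ℕ} {A : Fin m → List Bool} (hA : Function.Injective A)
    (hlen : ∀ i j, (A i).length = (A j).length) :
    Pairwise (Function.onFun Disjoint (winEvent A)) := by
  intro i j hij
  rw [Function.onFun, Set.disjoint_left]
  rintro ξ ⟨hi, hfin⟩ ⟨hj, -⟩
  obtain ⟨n, hn⟩ := ENat.ne_top_iff_exists.1 hfin
  have hsi := occursAt_iff_isSuffix.1 (occursAt_of_hitTime_eq (hi.symm.trans hn.symm))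
  have hsj := occursAt_iff_isSuffix.1 (occursAt_of_hitTime_eq (hj.symm.trans hn.symm))
  exact hij (hA ((List.suffix_of_suffix_length_le hsi hsj (hlen i j).le).eq_of_length (hlen i j)))

def IsFirstWin {m : ℕ} (A : Fin m → List Bool) (i : Fin m) (w : List Bool) : Prop :=
  A i <:+ w ∧ ∀ j, ¬ A j <:+: w.dropLast

namespace IsFirstWin

variable {m : ℕ} {A : Fin m → List Bool} {i : Fin m} {w : List Bool} {ξ : ℕ → Bool}

theorem hitTime_eq_length (hw : IsFirstWin A i w) (hξ : ξ ∈ wordCylinder w) :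
    hitTime (A i) ξ = w.length ∧ ∀ j, (w.length : ℕ∞) ≤ hitTime (A j) ξ := by
  have hlate : ∀ j, ∀ n < w.length, ¬ occursAt (A j) ξ n := by
    intro j n hn hocc
    rw [occursAt_iff_isSuffix, tosses_eq_take_of_mem_wordCylinder hξ hn.le] at hocc
    have htake : w.take n <+: w.dropLast := by
      rw [List.dropLast_eq_take]
      exact List.take_prefix_take_left (by omega)
    exact hw.2 j (hocc.isInfix.trans htake.isInfix)
  have hnow : occursAt (A i) ξ w.length := by
    rw [occursAt_iff_isSuffix, tosses_eq_take_of_mem_wordCylinder hξ le_rfl, List.take_length]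
    exact hw.1
  exact ⟨le_antisymm (hitTime_le_of_occursAt hnow) (le_hitTime_of_forall_lt (hlate i)),
    fun j => le_hitTime_of_forall_lt (hlate j)⟩

theorem gameTime_eq_length (hw : IsFirstWin A i w) (hξ : ξ ∈ wordCylinder w) :
    gameTime A ξ = w.length :=
  le_antisymm ((iInf_le _ i).trans (hw.hitTime_eq_length hξ).1.le)
    (le_iInf (hw.hitTime_eq_length hξ).2)

theorem wordCylinder_subset_winEvent (hw : IsFirstWin A i w) : wordCylinder w ⊆ winEvent A i :=
  fun _ hξ => ⟨(hw.gameTime_eq_length hξ).trans (hw.hitTime_eq_length hξ).1.symm,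
    by rw [hw.gameTime_eq_length hξ]; exact ENat.natCast_ne_top _⟩

theorem disjoint_wordCylinder {i' : Fin m} {w' : List Bool} (hw : IsFirstWin A i w)
    (hw' : IsFirstWin A i' w') (hne : w ≠ w') : Disjoint (wordCylinder w) (wordCylinder w') :=
  Set.disjoint_left.2 fun _ hξ hξ' => hne <| eq_of_mem_wordCylinder hξ hξ' <| by
    exact_mod_cast (hw.gameTime_eq_length hξ).symm.trans (hw'.gameTime_eq_length hξ')

end IsFirstWin

theorem IsCoinMeasure.measure_iUnion_wordCylinder {p : ℝ} {μ : Measure (ℕ → Bool)}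
    (hμ : IsCoinMeasure p μ) {ι : Type*} [Countable ι] {m : ℕ} {A : Fin m → List Bool}
    {i : Fin m} {w : ι → List Bool} (hw : ∀ x, IsFirstWin A i (w x))
    (hinj : Function.Injective w) :
    μ (⋃ x, wordCylinder (w x)) = ∑' x, ENNReal.ofReal (strP p (w x)) := by
  rw [measure_iUnion (fun x y hxy => (hw x).disjoint_wordCylinder (hw y) (hinj.ne hxy))
    fun x => measurableSet_wordCylinder _]
  exact tsum_congr fun x => hμ.measure_wordCylinder _

theorem measure_eq_of_subset_of_sum_measure_eq_one {Ω ι : Type*} [MeasurableSpace Ω] [Fintype ι]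
    {μ : Measure Ω} [IsProbabilityMeasure μ] {E U : ι → Set Ω}
    (hE : Pairwise (Function.onFun Disjoint E)) (hUE : ∀ i, U i ⊆ E i)
    (hU : ∀ i, MeasurableSet (U i)) (hsum : ∑ i, μ (U i) = 1) (i : ι) :
    μ (E i) = μ (U i) := by
  classical
  set V := ⋃ j ∈ Finset.univ.erase i, U j
  have hV : MeasurableSet V := Finset.measurableSet_biUnion _ fun j _ => hU j
  have hμV : μ (U i) + μ V = 1 := by
    rw [measure_biUnion_finset (fun j _ k _ hjk => (hE hjk).mono (hUE j) (hUE k))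
      fun j _ => hU j, Finset.add_sum_erase _ (fun j => μ (U j)) (Finset.mem_univ i), hsum]
  have hEV : E i ⊆ Vᶜ := Set.subset_compl_iff_disjoint_right.2 <| Set.disjoint_iUnion₂_right.2
    fun j hj => (hE (Finset.ne_of_mem_erase hj).symm).mono_right (hUE j)
  refine le_antisymm ?_ (measure_mono (hUE i))
  calc μ (E i) ≤ μ Vᶜ := measure_mono hEV
    _ = μ (U i) := by
      rw [prob_compl_eq_one_sub hV, ENNReal.sub_eq_of_eq_add (measure_ne_top μ V) hμV.symm]

theorem ENNReal.tsum_pi_fin_prod_eq_pow {α : Type*} (f : α → ℝ≥0∞) (n : ℕ) :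
    ∑' g : Fin n → α, ∏ i, f (g i) = (∑' a, f a) ^ n := by
  induction n with
  | zero => simp
  | succ n ih =>
    rw [← (Fin.consEquiv fun _ => α).tsum_eq, ENNReal.tsum_prod', pow_succ', ← ih,
      ← ENNReal.tsum_mul_right]
    refine tsum_congr fun a => ?_
    rw [← ENNReal.tsum_mul_left]
    exact tsum_congr fun g => by simp [Fin.prod_univ_succ]

theorem ENNReal.tsum_list_prod_map {α : Type*} (f : α → ℝ≥0∞) :
    ∑' l : List α, (l.map f).prod = (1 - ∑' a, f a)⁻¹ := by
  rw [← List.equivSigmaTuple.symm.tsum_eq, ENNReal.tsum_sigma', ← ENNReal.tsum_geometric]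
  refine tsum_congr fun n => ?_
  rw [← ENNReal.tsum_pi_fin_prod_eq_pow]
  exact tsum_congr fun g => by simp [List.equivSigmaTuple, List.map_ofFn, List.prod_ofFn]

theorem ENNReal.inv_one_sub_ofReal {r : ℝ} (h0 : 0 ≤ r) (h1 : r < 1) :
    (1 - ENNReal.ofReal r)⁻¹ = ENNReal.ofReal (1 - r)⁻¹ := by
  rw [← ENNReal.ofReal_one, ← ENNReal.ofReal_sub _ h0, ENNReal.ofReal_inv_of_pos (by linarith)]

theorem strP_append (p : ℝ) (u v : List Bool) : strP p (u ++ v) = strP p u * strP p v := by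
  simp [strP]

theorem strP_replicate (p : ℝ) (n : ℕ) (b : Bool) :
    strP p (List.replicate n b) = letterP p b ^ n := by
  simp [strP]

theorem strP_nonneg {p : ℝ} (hp0 : 0 ≤ p) (hp1 : p ≤ 1) (w : List Bool) : 0 ≤ strP p w :=
  List.prod_nonneg fun x hx => by
    obtain ⟨b, -, rfl⟩ := List.mem_map.1 hx
    cases b <;> simp [letterP] <;> linarith

theorem ofReal_strP_append {p : ℝ} (hp0 : 0 ≤ p) (hp1 : p ≤ 1) (u v : List Bool) :
    ENNReal.ofReal (strP p (u ++ v)) = ENNReal.ofReal (strP p u) * ENNReal.ofReal (strP p v) := by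
  rw [strP_append, ENNReal.ofReal_mul (strP_nonneg hp0 hp1 u)]

def block (d : ℕ) : List Bool := true :: List.replicate (d + 2) false

def resetWord (a : ℕ) (l : List ℕ) : List Bool := List.replicate a false ++ l.flatMap block

/-- `HH` is excluded at the front so that prepending `T` cannot create `THH`. -/
def SafeTail (L : List Bool) : Prop := (∀ j, ¬ exPatterns j <:+: L) ∧ ¬ [true, true] <+: L

namespace SafeTail

variable {L : List Bool}

theorem false_cons (h : SafeTail L) : SafeTail (false :: L) := by
  obtain ⟨hfree, hHH⟩ := h
  refine ⟨fun j hj => ?_, by simp⟩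
  rcases List.infix_cons_iff.1 hj with hp | hi
  · fin_cases j <;> simp_all [exPatterns]
  · exact hfree j hi

theorem replicate_false_append (h : SafeTail L) (a : ℕ) :
    SafeTail (List.replicate a false ++ L) := by
  induction a with
  | zero => simpa
  | succ a ih => simpa [List.replicate_succ] using ih.false_cons

theorem block_append (h : SafeTail L) (d : ℕ) : SafeTail (block d ++ L) := by
  have h' := h.replicate_false_append (d + 2)
  refine ⟨fun j hj => ?_, by simp [block, List.replicate_succ]⟩
  rcases List.infix_cons_iff.1 hj with hp | hi
  · fin_cases j <;> simp [exPatterns, List.replicate_succ] at hp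
  · exact h'.1 j hi

theorem resetWord_append (h : SafeTail L) (a : ℕ) (l : List ℕ) :
    SafeTail (resetWord a l ++ L) := by
  have hblocks : SafeTail (l.flatMap block ++ L) := by
    induction l with
    | nil => simpa
    | cons d l ih => simpa [List.flatMap_cons] using ih.block_append d
  simpa [resetWord] using hblocks.replicate_false_append a

end SafeTail

theorem safeTail_singleton_true : SafeTail [true] := by
  unfold SafeTail
  decide

theorem safeTail_true_false : SafeTail [true, false] := by
  unfold SafeTail
  decide

theorem singleton_false_suffix_resetWord {a : ℕ} {l : List ℕ} (h : (a, l) ≠ (0, [])) :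
    [false] <:+ resetWord a l := by
  rcases l.eq_nil_or_concat with rfl | ⟨L, d, rfl⟩
  · obtain ⟨a, rfl⟩ := Nat.exists_eq_succ_of_ne_zero (by simpa using h)
    exact ⟨List.replicate a false, by simp [resetWord, List.replicate_succ']⟩
  · exact ⟨List.replicate a false ++ L.flatMap block ++ true :: List.replicate (d + 1) false,
      by simp [resetWord, block, List.replicate_succ']⟩

theorem isFirstWin_thh {a : ℕ} {l : List ℕ} (h : (a, l) ≠ (0, [])) :
    IsFirstWin exPatterns 0 (resetWord a l ++ [true, true]) := by
  obtain ⟨t, ht⟩ := singleton_false_suffix_resetWord h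
  refine ⟨⟨t, by simp [exPatterns, ← ht]⟩, ?_⟩
  rw [show resetWord a l ++ [true, true] = (resetWord a l ++ [true]) ++ [true] by simp,
    List.dropLast_concat]
  exact (safeTail_singleton_true.resetWord_append a l).1

theorem isFirstWin_hth (a : ℕ) (l : List ℕ) :
    IsFirstWin exPatterns 1 (resetWord a l ++ [true, false, true]) := by
  refine ⟨List.suffix_append _ _, ?_⟩
  rw [show resetWord a l ++ [true, false, true] = (resetWord a l ++ [true, false]) ++ [true] by
    simp, List.dropLast_concat]
  exact (safeTail_true_false.resetWord_append a l).1

theorem isFirstWin_hht (k : ℕ) :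
    IsFirstWin exPatterns 2 (List.replicate (k + 2) true ++ [false]) := by
  refine ⟨⟨List.replicate k true, by simp [exPatterns, List.replicate_add]⟩, fun j hj => ?_⟩
  have hfalse : false ∈ exPatterns j := by fin_cases j <;> decide
  have := (List.dropLast_concat ▸ hj).subset hfalse
  simp at this

theorem replicate_false_append_inj {a b : ℕ} {u v : List Bool} (hu : u.head? = some true)
    (hv : v.head? = some true) (h : List.replicate a false ++ u = List.replicate b false ++ v) :
    a = b ∧ u = v := by
  induction a generalizing b with
  | zero => cases b <;> simp_all [List.replicate_succ]
  | succ a ih =>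
    cases b with
    | zero =>
      simp only [List.replicate_zero, List.nil_append] at h
      simp [← h, List.replicate_succ] at hv
    | succ b => simpa using ih (by simpa [List.replicate_succ] using h)

theorem head?_flatMap_block_append (l : List ℕ) (s : List Bool) :
    (l.flatMap block ++ true :: s).head? = some true := by
  cases l <;> simp [block]

theorem flatMap_block_append_inj {s : List Bool} :
    ∀ {l l' : List ℕ}, l.flatMap block ++ true :: s = l'.flatMap block ++ true :: s → l = l'
  | [], [], _ => rfl
  | [], _ :: _, h | _ :: _, [], h => by
    have := congrArg List.length h
    simp [block] at this
    omega
  | d :: l, d' :: l', h => by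
    simp only [List.flatMap_cons, block, List.cons_append, List.append_assoc, List.cons.injEq,
      true_and] at h
    obtain ⟨hd, hl⟩ := replicate_false_append_inj (head?_flatMap_block_append l s)
      (head?_flatMap_block_append l' s) h
    rw [show d = d' by omega, flatMap_block_append_inj hl]

theorem resetWord_append_inj {s : List Bool} {a a' : ℕ} {l l' : List ℕ}
    (h : resetWord a l ++ true :: s = resetWord a' l' ++ true :: s) : a = a' ∧ l = l' := by
  simp only [resetWord, List.append_assoc] at h
  obtain ⟨ha, hl⟩ := replicate_false_append_inj (head?_flatMap_block_append l s)
    (head?_flatMap_block_append l' s) h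
  exact ⟨ha, flatMap_block_append_inj hl⟩

section WordProbabilities

variable {p : ℝ}

theorem ofReal_strP_resetWord (hp0 : 0 ≤ p) (hp1 : p ≤ 1) (a : ℕ) (l : List ℕ) :
    ENNReal.ofReal (strP p (resetWord a l)) =
      ENNReal.ofReal (1 - p) ^ a * (l.map fun d => ENNReal.ofReal (strP p (block d))).prod := by
  rw [resetWord, ofReal_strP_append hp0 hp1, strP_replicate,
    ENNReal.ofReal_pow (by simpa [letterP])]
  congr 1
  induction l with
  | nil => simp [strP]
  | cons d l ih =>
    rw [List.flatMap_cons, ofReal_strP_append hp0 hp1, ih, List.map_cons, List.prod_cons]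

variable (hp0 : 0 < p) (hp1 : p < 1)
include hp0 hp1

theorem tsum_ofReal_strP_block :
    ∑' d, ENNReal.ofReal (strP p (block d)) = ENNReal.ofReal ((1 - p) ^ 2) := by
  have hblock : ∀ d, ENNReal.ofReal (strP p (block d)) =
      ENNReal.ofReal (p * (1 - p) ^ 2) * ENNReal.ofReal (1 - p) ^ d := fun d => by
    rw [← ENNReal.ofReal_pow (by linarith), ← ENNReal.ofReal_mul (by positivity)]
    simp [block, strP, letterP, List.prod_replicate, pow_add, mul_comm, mul_left_comm]
  rw [tsum_congr hblock, ENNReal.tsum_mul_left, ENNReal.tsum_geometric,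
    ENNReal.inv_one_sub_ofReal (by linarith) (by linarith), ← ENNReal.ofReal_mul (by positivity),
    show (1 : ℝ) - (1 - p) = p by ring]
  congr 1
  field_simp

theorem tsum_ofReal_strP_resetWord :
    ∑' x : ℕ × List ℕ, ENNReal.ofReal (strP p (resetWord x.1 x.2)) =
      ENNReal.ofReal (p⁻¹ * (1 - (1 - p) ^ 2)⁻¹) := by
  simp_rw [ENNReal.tsum_prod', ofReal_strP_resetWord hp0.le hp1.le, ENNReal.tsum_mul_left,
    ENNReal.tsum_list_prod_map, tsum_ofReal_strP_block hp0 hp1, ENNReal.tsum_mul_right,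
    ENNReal.tsum_geometric]
  rw [ENNReal.inv_one_sub_ofReal (by linarith) (by linarith),
    ENNReal.inv_one_sub_ofReal (by positivity) (by nlinarith), show (1 : ℝ) - (1 - p) = p by ring,
    ← ENNReal.ofReal_mul (by positivity)]

end WordProbabilities

/-- Excluding `(0, [])` makes the reset word before `HH` end in `T`. -/
def winCylinders : Fin 3 → Set (ℕ → Bool) :=
  ![⋃ x : ({(0, [])}ᶜ : Set (ℕ × List ℕ)),
      wordCylinder (resetWord x.1.1 x.1.2 ++ [true, true]),
    ⋃ x : ℕ × List ℕ, wordCylinder (resetWord x.1 x.2 ++ [true, false, true]),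
    ⋃ k : ℕ, wordCylinder (List.replicate (k + 2) true ++ [false])]

theorem winCylinders_subset_winEvent (i : Fin 3) : winCylinders i ⊆ winEvent exPatterns i := by
  fin_cases i
  · exact Set.iUnion_subset fun x => (isFirstWin_thh x.2).wordCylinder_subset_winEvent
  · exact Set.iUnion_subset fun x => (isFirstWin_hth x.1 x.2).wordCylinder_subset_winEvent
  · exact Set.iUnion_subset fun k => (isFirstWin_hht k).wordCylinder_subset_winEvent

theorem measurableSet_winCylinders (i : Fin 3) : MeasurableSet (winCylinders i) := by
  fin_cases i <;> exact .iUnion fun _ => measurableSet_wordCylinder _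

def winProb (p : ℝ) : Fin 3 → ℝ :=
  ![(1 - p) * (1 + p * (1 - p)) / (1 + (1 - p)), (1 - p) / (1 + (1 - p)),
    p * (1 - (1 - p) ^ 2) / (1 + (1 - p))]

section WinningProbabilities

variable {p : ℝ} (hp0 : 0 < p) (hp1 : p < 1)
include hp0 hp1

theorem winProb_nonneg (i : Fin 3) : 0 ≤ winProb p i := by
  have hq : 0 ≤ 1 - (1 - p) ^ 2 := by nlinarith
  fin_cases i <;> simp only [winProb] <;> simp <;> positivity

theorem sum_winProb : ∑ i, winProb p i = 1 := by
  have : 1 + (1 - p) ≠ 0 := by linarith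
  simp only [Fin.sum_univ_three, winProb]
  simp
  field_simp
  ring

variable {μ : Measure (ℕ → Bool)} (hμ : IsCoinMeasure p μ)
include hμ

theorem measure_winCylinders_zero : μ (winCylinders 0) = ENNReal.ofReal (winProb p 0) := by
  set f := fun x : ℕ × List ℕ => ENNReal.ofReal (strP p (resetWord x.1 x.2 ++ [true, true]))
  have hinj : Function.Injective
      fun x : ({(0, [])}ᶜ : Set (ℕ × List ℕ)) => resetWord x.1.1 x.1.2 ++ [true, true] :=
    fun x y h => Subtype.ext (Prod.ext_iff.2 (resetWord_append_inj h))
  have htotal : ∑' x, f x = ENNReal.ofReal (p * p) + ENNReal.ofReal (winProb p 0) := by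
    simp_rw [f, ofReal_strP_append hp0.le hp1.le]
    have hq : 0 < 1 - (1 - p) ^ 2 := by nlinarith
    rw [ENNReal.tsum_mul_right, tsum_ofReal_strP_resetWord hp0 hp1,
      ← ENNReal.ofReal_mul (by positivity),
      ← ENNReal.ofReal_add (by positivity) (winProb_nonneg hp0 hp1 0)]
    have : 1 + (1 - p) ≠ 0 := by linarith
    congr 1
    simp [strP, letterP, winProb]
    field_simp
    ring
  have hsplit := ENNReal.summable.tsum_add_tsum_compl (s := {((0 : ℕ), ([] : List ℕ))})
    (f := f) ENNReal.summable
  rw [tsum_singleton, htotal] at hsplit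
  have hf0 : f (0, []) = ENNReal.ofReal (p * p) := by simp [f, resetWord, strP, letterP]
  rw [winCylinders, Matrix.cons_val_zero,
    hμ.measure_iUnion_wordCylinder (fun x => isFirstWin_thh x.2) hinj]
  rw [hf0] at hsplit
  exact (ENNReal.add_right_inj ENNReal.ofReal_ne_top).1 hsplit

theorem measure_winCylinders_one : μ (winCylinders 1) = ENNReal.ofReal (winProb p 1) := by
  have hq : 0 < 1 - (1 - p) ^ 2 := by nlinarith
  rw [winCylinders, Matrix.cons_val_one, Matrix.cons_val_zero,
    hμ.measure_iUnion_wordCylinder (fun x => isFirstWin_hth x.1 x.2)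
      fun x y h => Prod.ext_iff.2 (resetWord_append_inj h)]
  simp_rw [ofReal_strP_append hp0.le hp1.le]
  rw [ENNReal.tsum_mul_right, tsum_ofReal_strP_resetWord hp0 hp1,
    ← ENNReal.ofReal_mul (by positivity)]
  have : 1 + (1 - p) ≠ 0 := by linarith
  congr 1
  simp [strP, letterP, winProb]
  field_simp
  ring

theorem measure_winCylinders_two : μ (winCylinders 2) = ENNReal.ofReal (winProb p 2) := by
  have hword : ∀ k : ℕ, ENNReal.ofReal (strP p (List.replicate (k + 2) true ++ [false])) =
      ENNReal.ofReal (p ^ 2 * (1 - p)) * ENNReal.ofReal p ^ k := fun k => by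
    rw [← ENNReal.ofReal_pow hp0.le, ← ENNReal.ofReal_mul (by nlinarith)]
    congr 1
    simp [strP, letterP, List.prod_replicate]
    ring
  change μ (⋃ k : ℕ, wordCylinder (List.replicate (k + 2) true ++ [false])) = _
  rw [hμ.measure_iUnion_wordCylinder isFirstWin_hht
      fun k k' h => by simpa using congrArg List.length h,
    tsum_congr hword, ENNReal.tsum_mul_left, ENNReal.tsum_geometric,
    ENNReal.inv_one_sub_ofReal hp0.le hp1, ← ENNReal.ofReal_mul (by nlinarith)]
  have : 1 - p ≠ 0 := by linarith
  have : 1 + (1 - p) ≠ 0 := by linarith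
  congr 1
  simp [winProb]
  field_simp
  ring

theorem measure_winCylinders (i : Fin 3) : μ (winCylinders i) = ENNReal.ofReal (winProb p i) := by
  fin_cases i
  exacts [measure_winCylinders_zero hp0 hp1 hμ, measure_winCylinders_one hp0 hp1 hμ,
    measure_winCylinders_two hp0 hp1 hμ]

theorem sum_measure_winCylinders : ∑ i, μ (winCylinders i) = 1 := by
  simp_rw [measure_winCylinders hp0 hp1 hμ]
  rw [← ENNReal.ofReal_sum_of_nonneg fun i _ => winProb_nonneg hp0 hp1 i, sum_winProb hp0 hp1,
    ENNReal.ofReal_one]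

end WinningProbabilities

/-- For the three patterns `A₁ = THH`, `A₂ = HTH`, `A₃ = HHT` in
the three-player game with heads probability `p` and tails probability `q = 1 − p`
(`0 < p < 1`), the winning probabilities are `p_{A₁} = q(1 + pq)/(1 + q)`,
`p_{A₂} = q/(1 + q)`, and `p_{A₃} = p(1 − q²)/(1 + q)`. In particular, for the
fair coin `p = 1/2` one gets `p_{A₁} = 5/12`, `p_{A₂} = 1/3` and `p_{A₃} = 1/4`. -/
theorem example_three_players (p : ℝ) (hp0 : 0 < p) (hp1 : p < 1)
    (μ : Measure (ℕ → Bool)) [IsProbabilityMeasure μ] (hμ : IsCoinMeasure p μ) :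
    (μ {ξ | gameTime exPatterns ξ = hitTime (exPatterns 0) ξ ∧
        gameTime exPatterns ξ ≠ ⊤}).toReal =
      (1 - p) * (1 + p * (1 - p)) / (1 + (1 - p)) ∧
    (μ {ξ | gameTime exPatterns ξ = hitTime (exPatterns 1) ξ ∧
        gameTime exPatterns ξ ≠ ⊤}).toReal =
      (1 - p) / (1 + (1 - p)) ∧
    (μ {ξ | gameTime exPatterns ξ = hitTime (exPatterns 2) ξ ∧
        gameTime exPatterns ξ ≠ ⊤}).toReal =
      p * (1 - (1 - p) ^ 2) / (1 + (1 - p)) ∧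
    (p = 1 / 2 →
      (μ {ξ | gameTime exPatterns ξ = hitTime (exPatterns 0) ξ ∧
          gameTime exPatterns ξ ≠ ⊤}).toReal = 5 / 12 ∧
      (μ {ξ | gameTime exPatterns ξ = hitTime (exPatterns 1) ξ ∧
          gameTime exPatterns ξ ≠ ⊤}).toReal = 1 / 3 ∧
      (μ {ξ | gameTime exPatterns ξ = hitTime (exPatterns 2) ξ ∧
          gameTime exPatterns ξ ≠ ⊤}).toReal = 1 / 4) := by
  have hwin (i : Fin 3) : (μ (winEvent exPatterns i)).toReal = winProb p i := by
    rw [measure_eq_of_subset_of_sum_measure_eq_one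
        (pairwise_disjoint_winEvent (by decide) (by decide)) winCylinders_subset_winEvent
        measurableSet_winCylinders (sum_measure_winCylinders hp0 hp1 hμ) i,
      measure_winCylinders hp0 hp1 hμ, ENNReal.toReal_ofReal (winProb_nonneg hp0 hp1 i)]
  refine ⟨hwin 0, hwin 1, hwin 2, fun hp => ?_⟩
  subst hp
  refine ⟨(hwin 0).trans ?_, (hwin 1).trans ?_, (hwin 2).trans ?_⟩ <;>
    simp [winProb] <;> norm_num
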